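/- arXiv:1811.05970 — 3 statements merged into one kernel-verified Lean document; each statement's English description precedes it below -/
import Mathlib

section
/- Assume (p₀), (V_α) and (G_β) hold for a weighted graph G with distance d. Then there exists a constant C such that d(x,y) ≤ C · d_G(x,y) for all x,y ∈ G, where d_G is the graph distance; moreover there exists c > 0 with d(x,y) ≥ c for all distinct x,y ∈ G, and there exist constants 0 < c' ≤ C' < ∞ with c' ≤ λ_{x,y} ≤ λ_x ≤ C' for all neighbors x ∼ y. -/
open scoped ENNReal

open Classical in
noncomputable def nstep {V : Type*} (p : V → V → ℝ) : ℕ → V → V → ℝ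
  | 0, x, y => if x = y then 1 else 0
  | n + 1, x, y => ∑' z, nstep p n x z * p z y

noncomputable def green {V : Type*} (p : V → V → ℝ) (lam : V → ℝ) (x y : V) : ℝ :=
  (1 / lam y) * ∑' n, nstep p n x y

open Classical in
noncomputable def killedKernel {V : Type*} (p : V → V → ℝ) (U : Set V) (x y : V) : ℝ :=
  if x ∈ U ∧ y ∈ U then p x y else 0

noncomputable def killedGreen {V : Type*} (p : V → V → ℝ) (lam : V → ℝ) (U : Set V) (x y : V) : ℝ :=
  (1 / lam y) * ∑' n, nstep (killedKernel p U) n x y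

open Classical in
noncomputable def hitProb {V : Type*} (p : V → V → ℝ) (A : Set V) (x : V) : ℝ :=
  ∑' n : ℕ, ∑' y : V, if y ∈ A then nstep (fun a b => if a ∈ A then 0 else p a b) n x y else 0

open Classical in
noncomputable def eqMeasure {V : Type*} (p : V → V → ℝ) (lam : V → ℝ) (A : Set V) (x : V) : ℝ :=
  if x ∈ A then lam x * (1 - ∑' y, p x y * hitProb p A y) else 0

noncomputable def capaE {V : Type*} (p : V → V → ℝ) (lam : V → ℝ) (A : Set V) : ℝ≥0∞ :=
  ∑' x : V, Set.indicator A (fun v => ENNReal.ofReal (eqMeasure p lam A v)) x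

section Aux

variable {V : Type*} (G : SimpleGraph V) [∀ v : V, Fintype (G.neighborSet v)]

open Classical in
/-- Finite set containing the support of the `n`-step kernel started at `x`. -/
noncomputable def suppB (x : V) : ℕ → Finset V
  | 0 => {x}
  | n + 1 => (suppB x n).biUnion (fun u => G.neighborFinset u)

open Classical in
lemma nstep_zero {p : V → V → ℝ} (x y : V) :
    nstep p 0 x y = if x = y then 1 else 0 := rfl

lemma nstep_succ {p : V → V → ℝ} (n : ℕ) (x y : V) :
    nstep p (n + 1) x y = ∑' z, nstep p n x z * p z y := rfl

variable {G}

lemma nstep_eq_zero {r : V → V → ℝ} (hr : ∀ a b, r a b ≠ 0 → G.Adj a b) :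
    ∀ (n : ℕ) (x z : V), z ∉ suppB G x n → nstep r n x z = 0 := by
  classical
  intro n
  induction n with
  | zero =>
      intro x z hz
      simp only [suppB, Finset.mem_singleton] at hz
      rw [nstep_zero, if_neg (fun h => hz h.symm)]
  | succ n ih =>
      intro x z hz
      rw [nstep_succ]
      have hterm : ∀ u, nstep r n x u * r u z = 0 := by
        intro u
        by_cases hu : u ∈ suppB G x n
        · by_cases hruz : r u z = 0
          · rw [hruz, mul_zero]
          · exact absurd (Finset.mem_biUnion.mpr ⟨u, hu,
              (SimpleGraph.mem_neighborFinset _ _ _).mpr (hr u z hruz)⟩) hz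
        · rw [ih x u hu, zero_mul]
      simp only [hterm, tsum_zero]

lemma summable_nstep_mul {r : V → V → ℝ} (hr : ∀ a b, r a b ≠ 0 → G.Adj a b)
    (n : ℕ) (x : V) (h : V → ℝ) :
    Summable (fun u => nstep r n x u * h u) := by
  apply summable_of_ne_finset_zero (s := suppB G x n)
  intro u hu
  rw [nstep_eq_zero hr n x u hu, zero_mul]

lemma nstep_succ_eq_sum {r : V → V → ℝ} (hr : ∀ a b, r a b ≠ 0 → G.Adj a b)
    (n : ℕ) (x z : V) :
    nstep r (n + 1) x z = ∑ u ∈ suppB G x n, nstep r n x u * r u z := by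
  rw [nstep_succ]
  apply tsum_eq_sum
  intro u hu
  rw [nstep_eq_zero hr n x u hu, zero_mul]

lemma nstep_nonneg {r : V → V → ℝ} (hr0 : ∀ a b, 0 ≤ r a b) :
    ∀ (n : ℕ) (x z : V), 0 ≤ nstep r n x z := by
  intro n
  induction n with
  | zero => intro x z; rw [nstep_zero]; positivity
  | succ n ih =>
      intro x z
      rw [nstep_succ]
      exact tsum_nonneg fun u => mul_nonneg (ih x u) (hr0 u z)

end Aux

section Mass

variable {V : Type*} {G : SimpleGraph V} [∀ v : V, Fintype (G.neighborSet v)] {p : V → V → ℝ}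

lemma summable_ker (hadj : ∀ a b, p a b ≠ 0 → G.Adj a b) (u : V) (h : V → ℝ) :
    Summable (fun z => h z * p u z) := by
  apply summable_of_ne_finset_zero (s := G.neighborFinset u)
  intro z hz
  have : p u z = 0 := by
    by_contra hne
    exact hz ((SimpleGraph.mem_neighborFinset _ _ _).mpr (hadj u z hne))
  rw [this, mul_zero]

lemma nstep_mass (hadj : ∀ a b, p a b ≠ 0 → G.Adj a b)
    (hmass1 : ∀ u, ∑' z, p u z = 1) :
    ∀ (n : ℕ) (x : V), ∑' z, nstep p n x z = 1 := by
  intro n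
  induction n with
  | zero =>
      intro x
      rw [tsum_eq_single x (fun b hb => by rw [nstep_zero, if_neg (fun h => hb h.symm)])]
      rw [nstep_zero, if_pos rfl]
  | succ n ih =>
      intro x
      have h1 : ∀ z : V, nstep p (n+1) x z = ∑ u ∈ suppB G x n, nstep p n x u * p u z :=
        fun z => nstep_succ_eq_sum hadj n x z
      calc ∑' z, nstep p (n+1) x z
          = ∑' z, ∑ u ∈ suppB G x n, nstep p n x u * p u z := tsum_congr h1
        _ = ∑ u ∈ suppB G x n, ∑' z, nstep p n x u * p u z := by
            apply Summable.tsum_finsetSum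
            intro u _
            exact summable_ker hadj u fun _ => nstep p n x u
        _ = ∑ u ∈ suppB G x n, nstep p n x u := by
            apply Finset.sum_congr rfl
            intro u _
            rw [tsum_mul_left, hmass1 u, mul_one]
        _ = ∑' u, nstep p n x u := by
            symm
            apply tsum_eq_sum
            intro u hu
            exact nstep_eq_zero hadj n x u hu
        _ = 1 := ih x

end Mass

section Decomp

variable {V : Type*} {G : SimpleGraph V} [∀ v : V, Fintype (G.neighborSet v)] {p : V → V → ℝ}

open Classical in
lemma qadj (hadj : ∀ a b, p a b ≠ 0 → G.Adj a b) (y : V) :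
    ∀ a b, (if a = y then 0 else p a b) ≠ 0 → G.Adj a b := by
  intro a b h
  by_cases ha : a = y
  · simp [ha] at h
  · rw [if_neg ha] at h; exact hadj a b h

open Classical in
lemma decomp (hadj : ∀ a b, p a b ≠ 0 → G.Adj a b) (x y : V) (hxy : x ≠ y) :
    ∀ (n : ℕ) (z : V), nstep p n x z =
      (if z = y then 0 else nstep (fun a b => if a = y then 0 else p a b) n x z)
      + ∑ k ∈ Finset.range (n+1),
          nstep (fun a b => if a = y then 0 else p a b) k x y * nstep p (n-k) y z := by
  classical
  set q : V → V → ℝ := fun a b => if a = y then 0 else p a b with hq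
  have hqadj : ∀ a b, q a b ≠ 0 → G.Adj a b := qadj hadj y
  intro n
  induction n with
  | zero =>
      intro z
      simp only [zero_add, Finset.sum_range_one, nstep_zero, Nat.sub_self]
      rw [if_neg hxy, zero_mul, add_zero]
      by_cases hz : z = y
      · rw [if_pos hz, if_neg (fun h : x = z => hxy (h.trans hz))]
      · rw [if_neg hz]
  | succ n ih =>
      intro z
      have s1 : Summable (fun u => (if u = y then 0 else nstep q n x u) * p u z) := by
        apply summable_of_ne_finset_zero (s := suppB G x n)
        intro u hu
        rw [nstep_eq_zero hqadj n x u hu]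
        simp
      have s2k : ∀ k, Summable (fun u => nstep q k x y * (nstep p (n-k) y u * p u z)) :=
        fun k => (summable_nstep_mul hadj (n-k) y (fun u => p u z)).mul_left _
      have s2 : Summable (fun u => ∑ k ∈ Finset.range (n+1),
          nstep q k x y * (nstep p (n-k) y u * p u z)) :=
        summable_sum (fun k _ => s2k k)
      have key : nstep p (n+1) x z =
          nstep q (n+1) x z
          + ∑ k ∈ Finset.range (n+1), nstep q k x y * nstep p ((n-k)+1) y z := by
        calc nstep p (n+1) x z = ∑' u, nstep p n x u * p u z := nstep_succ n x z
          _ = ∑' u, ((if u = y then 0 else nstep q n x u) * p u z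
                + ∑ k ∈ Finset.range (n+1), nstep q k x y * (nstep p (n-k) y u * p u z)) := by
              apply tsum_congr
              intro u
              rw [ih u, add_mul, Finset.sum_mul]
              congr 1
              apply Finset.sum_congr rfl
              intro k _
              ring
          _ = (∑' u, (if u = y then 0 else nstep q n x u) * p u z)
              + ∑' u, ∑ k ∈ Finset.range (n+1), nstep q k x y * (nstep p (n-k) y u * p u z) :=
              Summable.tsum_add s1 s2
          _ = nstep q (n+1) x z
              + ∑ k ∈ Finset.range (n+1), nstep q k x y * nstep p ((n-k)+1) y z := by
              congr 1
              · rw [nstep_succ]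
                apply tsum_congr
                intro u
                by_cases hu : u = y
                · subst hu; simp [hq]
                · rw [if_neg hu]
                  congr 1
                  simp [hq, hu]
              · rw [Summable.tsum_finsetSum (fun k _ => s2k k)]
                apply Finset.sum_congr rfl
                intro k _
                rw [tsum_mul_left, ← nstep_succ]
      rw [key]
      have hsum : ∑ k ∈ Finset.range (n+1), nstep q k x y * nstep p ((n-k)+1) y z
          = ∑ k ∈ Finset.range (n+1), nstep q k x y * nstep p (n+1-k) y z := by
        apply Finset.sum_congr rfl
        intro k hk
        rw [Finset.mem_range] at hk
        rw [Nat.succ_sub (Nat.lt_succ_iff.mp hk)]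
      rw [hsum]
      conv_rhs => rw [Finset.sum_range_succ, Nat.sub_self, nstep_zero]
      by_cases hz : z = y
      · subst hz
        rw [if_pos rfl, if_pos rfl, mul_one]
        ring
      · rw [if_neg hz, if_neg (fun h : y = z => hz h.symm), mul_zero, add_zero]

end Decomp

section GreenLe

variable {V : Type*} {G : SimpleGraph V} [∀ v : V, Fintype (G.neighborSet v)] {p : V → V → ℝ}

lemma summable_nstep (hadj : ∀ a b, p a b ≠ 0 → G.Adj a b) (n : ℕ) (x : V) :
    Summable (fun z => nstep p n x z) :=
  (summable_nstep_mul hadj n x (fun _ => 1)).congr (fun z => by rw [mul_one])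

open Classical in
lemma fsum_le_one (hadj : ∀ a b, p a b ≠ 0 → G.Adj a b) (hpnn : ∀ a b, 0 ≤ p a b)
    (hmass1 : ∀ u, ∑' z, p u z = 1) (x y : V) (hxy : x ≠ y) (M : ℕ) :
    ∑ k ∈ Finset.range M, nstep (fun a b => if a = y then 0 else p a b) k x y ≤ 1 := by
  classical
  set q : V → V → ℝ := fun a b => if a = y then 0 else p a b with hq
  have hqadj : ∀ a b, q a b ≠ 0 → G.Adj a b := qadj hadj y
  have hqnn : ∀ a b, 0 ≤ q a b := fun a b => by
    by_cases h : a = y <;> simp [hq, h, hpnn a b]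
  cases M with
  | zero => simp
  | succ N =>
      calc ∑ k ∈ Finset.range (N+1), nstep q k x y
          = ∑ k ∈ Finset.range (N+1), ∑' z, nstep q k x y * nstep p (N-k) y z := by
            apply Finset.sum_congr rfl
            intro k _
            rw [tsum_mul_left, nstep_mass hadj hmass1 (N-k) y, mul_one]
        _ = ∑' z, ∑ k ∈ Finset.range (N+1), nstep q k x y * nstep p (N-k) y z := by
            rw [Summable.tsum_finsetSum]
            intro k _
            exact (summable_nstep hadj (N-k) y).mul_left _
        _ ≤ ∑' z, nstep p N x z := by
            apply Summable.tsum_le_tsum _ _ (summable_nstep hadj N x)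
            · intro z
              rw [decomp hadj x y hxy N z]
              have : 0 ≤ (if z = y then 0 else nstep q N x z) := by
                by_cases h : z = y
                · rw [if_pos h]
                · rw [if_neg h]; exact nstep_nonneg hqnn N x z
              linarith
            · apply summable_sum
              intro k _
              exact (summable_nstep hadj (N-k) y).mul_left _
        _ = 1 := nstep_mass hadj hmass1 N x

lemma conv_id (f g : ℕ → ℝ) : ∀ M : ℕ,
    ∑ n ∈ Finset.range M, ∑ k ∈ Finset.range (n+1), f k * g (n-k)
      = ∑ k ∈ Finset.range M, f k * ∑ m ∈ Finset.range (M-k), g m := by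
  intro M
  induction M with
  | zero => simp
  | succ M ihc =>
      rw [Finset.sum_range_succ, ihc]
      conv_rhs => rw [Finset.sum_range_succ]
      have h1 : ∀ k ∈ Finset.range M, f k * ∑ m ∈ Finset.range (M+1-k), g m
          = f k * ∑ m ∈ Finset.range (M-k), g m + f k * g (M-k) := by
        intro k hk
        rw [Finset.mem_range] at hk
        rw [Nat.succ_sub (le_of_lt hk), Finset.sum_range_succ, mul_add]
      rw [Finset.sum_congr rfl h1, Finset.sum_add_distrib]
      have h2 : M + 1 - M = 1 := by omega
      rw [h2, Finset.sum_range_one]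
      conv_lhs => rw [Finset.sum_range_succ]
      rw [Nat.sub_self]
      ring

open Classical in
lemma G_le_Gdiag (hadj : ∀ a b, p a b ≠ 0 → G.Adj a b) (hpnn : ∀ a b, 0 ≤ p a b)
    (hmass1 : ∀ u, ∑' z, p u z = 1) (htrans : ∀ x y, Summable (fun n => nstep p n x y))
    (x y : V) (hxy : x ≠ y) :
    ∑' n, nstep p n x y ≤ ∑' n, nstep p n y y := by
  classical
  set q : V → V → ℝ := fun a b => if a = y then 0 else p a b with hq
  have hqadj : ∀ a b, q a b ≠ 0 → G.Adj a b := qadj hadj y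
  have hqnn : ∀ a b, 0 ≤ q a b := fun a b => by
    by_cases h : a = y <;> simp [hq, h, hpnn a b]
  have hGyy_nn : 0 ≤ ∑' n, nstep p n y y :=
    tsum_nonneg (fun n => nstep_nonneg hpnn n y y)
  apply Real.tsum_le_of_sum_range_le (fun n => nstep_nonneg hpnn n x y)
  intro M
  have hdec : ∀ n, nstep p n x y
      = ∑ k ∈ Finset.range (n+1), nstep q k x y * nstep p (n-k) y y := by
    intro n
    rw [decomp hadj x y hxy n y, if_pos rfl, zero_add]
  calc ∑ n ∈ Finset.range M, nstep p n x y
      = ∑ k ∈ Finset.range M, nstep q k x y * ∑ m ∈ Finset.range (M-k), nstep p m y y := by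
        rw [← conv_id]
        exact Finset.sum_congr rfl (fun n _ => hdec n)
    _ ≤ ∑ k ∈ Finset.range M, nstep q k x y * ∑' n, nstep p n y y := by
        apply Finset.sum_le_sum
        intro k _
        apply mul_le_mul_of_nonneg_left _ (nstep_nonneg hqnn k x y)
        exact Summable.sum_le_tsum _ (fun n _ => nstep_nonneg hpnn n y y) (htrans y y)
    _ = (∑ k ∈ Finset.range M, nstep q k x y) * ∑' n, nstep p n y y := by
        rw [Finset.sum_mul]
    _ ≤ 1 * ∑' n, nstep p n y y := by
        apply mul_le_mul_of_nonneg_right _ hGyy_nn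
        exact fsum_le_one hadj hpnn hmass1 x y hxy M
    _ = ∑' n, nstep p n y y := one_mul _

end GreenLe

section Pos

variable {V : Type*} {G : SimpleGraph V} [∀ v : V, Fintype (G.neighborSet v)] {p : V → V → ℝ}

lemma nstep_pos_of_walk (hadj : ∀ a b, p a b ≠ 0 → G.Adj a b) (hpnn : ∀ a b, 0 ≤ p a b)
    (hppos : ∀ a b, G.Adj a b → 0 < p a b) :
    ∀ (n : ℕ) (x y : V) (W : G.Walk y x), W.length = n → 0 < nstep p n x y := by
  intro n
  induction n with
  | zero =>
      intro x y W hW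
      have : y = x := W.eq_of_length_eq_zero hW
      subst this
      rw [nstep_zero, if_pos rfl]
      norm_num
  | succ n ih =>
      intro x y W hW
      cases W with
      | nil => simp at hW
      | @cons _ z _ h W' =>
          simp only [SimpleGraph.Walk.length_cons, Nat.succ_inj] at hW
          have h1 : 0 < nstep p n x z * p z y :=
            mul_pos (ih x z W' hW) (hppos z y h.symm)
          have h2 : nstep p n x z * p z y ≤ ∑' u, nstep p n x u * p u y :=
            Summable.le_tsum (summable_nstep_mul hadj n x (fun u => p u y)) z
              (fun u _ => mul_nonneg (nstep_nonneg hpnn n x u) (hpnn u y))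
          rw [nstep_succ]
          linarith

end Pos

/-- under (p₀), (V_α), (G_β), the distance d is dominated by a multiple of the
graph distance, distinct points are uniformly d-separated, and edge and vertex weights are
uniformly bounded above and below. -/
theorem distance_and_weight_bounds
    {V : Type*} (G : SimpleGraph V) [∀ v : V, Fintype (G.neighborSet v)] [Infinite V]
    (hconn : G.Connected)
    (w : V → V → ℝ) (lam : V → ℝ) (p : V → V → ℝ) (d : V → V → ℝ)
    (hw_symm : ∀ x y, w x y = w y x)
    (hw_nonneg : ∀ x y, 0 ≤ w x y)
    (hw_adj : ∀ x y, 0 < w x y ↔ G.Adj x y)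
    (hlam : ∀ x, lam x = ∑ y ∈ G.neighborFinset x, w x y)
    (hp : ∀ x y, p x y = w x y / lam x)
    (htrans : ∀ x y, Summable (fun n => nstep p n x y))
    (c₀ : ℝ) (hc₀ : 0 < c₀) (hp₀ : ∀ x y, G.Adj x y → c₀ ≤ p x y)
    (hd_symm : ∀ x y, d x y = d y x)
    (hd_self : ∀ x, d x x = 0)
    (hd_nonneg : ∀ x y, 0 ≤ d x y)
    (hd_tri : ∀ x y z, d x z ≤ d x y + d y z)
    (hBfin : ∀ (x : V) (L : ℝ), {y | d x y ≤ L}.Finite)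
    (α β : ℝ) (hα : 2 < α) (hβ₂ : 2 ≤ β) (hβα : β < α)
    (cV CV : ℝ) (hcV : 0 < cV)
    (hVol : ∀ (x : V) (L : ℝ), 1 ≤ L →
      cV * L ^ α ≤ ∑ y ∈ (hBfin x L).toFinset, lam y ∧
        ∑ y ∈ (hBfin x L).toFinset, lam y ≤ CV * L ^ α)
    (cg Cg : ℝ) (hcg : 0 < cg)
    (hGdiag : ∀ x : V, cg ≤ green p lam x x ∧ green p lam x x ≤ Cg)
    (hGoff : ∀ x y : V, x ≠ y →
      cg * d x y ^ (-(α - β)) ≤ green p lam x y ∧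
        green p lam x y ≤ Cg * d x y ^ (-(α - β))) :
    (∃ C : ℝ, 0 < C ∧ ∀ x y : V, d x y ≤ C * (G.dist x y : ℝ)) ∧
    (∃ c : ℝ, 0 < c ∧ ∀ x y : V, x ≠ y → c ≤ d x y) ∧
    (∃ c' C' : ℝ, 0 < c' ∧ ∀ x y : V, G.Adj x y →
      c' ≤ w x y ∧ w x y ≤ lam x ∧ lam x ≤ C') := by
  classical
  set ν : ℝ := α - β with hν_def
  have hν : 0 < ν := by simp [hν_def]; linarith
  -- basic kernel facts
  have hlam_nn : ∀ x, 0 ≤ lam x := by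
    intro x
    rw [hlam x]
    exact Finset.sum_nonneg (fun y _ => hw_nonneg x y)
  have hadj : ∀ a b, p a b ≠ 0 → G.Adj a b := by
    intro a b h
    rw [hp] at h
    have hw : w a b ≠ 0 := fun h0 => h (by rw [h0, zero_div])
    exact (hw_adj a b).mp (lt_of_le_of_ne (hw_nonneg a b) (Ne.symm hw))
  have hpnn : ∀ a b, 0 ≤ p a b := fun a b => by
    rw [hp]; exact div_nonneg (hw_nonneg a b) (hlam_nn a)
  have hppos : ∀ a b, G.Adj a b → 0 < p a b := fun a b h => lt_of_lt_of_le hc₀ (hp₀ a b h)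
  have hex_nb : ∀ u : V, ∃ z, G.Adj u z := by
    intro u
    obtain ⟨v, hv⟩ := exists_ne u
    obtain ⟨W⟩ := hconn.preconnected u v
    cases W with
    | nil => exact absurd rfl hv.symm
    | cons h _ => exact ⟨_, h⟩
  have hlam_pos : ∀ u, 0 < lam u := by
    intro u
    obtain ⟨z, hz⟩ := hex_nb u
    have h1 : w u z ≤ lam u := by
      rw [hlam u]
      exact Finset.single_le_sum (fun y _ => hw_nonneg u y)
        ((SimpleGraph.mem_neighborFinset _ _ _).mpr hz)
    exact lt_of_lt_of_le ((hw_adj u z).mpr hz) h1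
  have hmass1 : ∀ u, ∑' z, p u z = 1 := by
    intro u
    have h0 : ∀ z ∉ G.neighborFinset u, p u z = 0 := by
      intro z hz
      rw [hp]
      have : ¬ 0 < w u z := fun hlt =>
        hz ((SimpleGraph.mem_neighborFinset _ _ _).mpr ((hw_adj u z).mp hlt))
      have : w u z = 0 := le_antisymm (not_lt.mp this) (hw_nonneg u z)
      rw [this, zero_div]
    rw [tsum_eq_sum h0]
    have : ∀ z ∈ G.neighborFinset u, p u z = w u z / lam u := fun z _ => hp u z
    rw [Finset.sum_congr rfl this, ← Finset.sum_div, ← hlam u, div_self (ne_of_gt (hlam_pos u))]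
  -- constants
  obtain ⟨x₀⟩ : Nonempty V := inferInstance
  have hCg : 0 < Cg := lt_of_lt_of_le hcg (le_trans (hGdiag x₀).1 (hGdiag x₀).2)
  have hCV : 0 < CV := by
    have h := hVol x₀ 1 le_rfl
    rw [Real.one_rpow] at h
    nlinarith [h.1, h.2]
  -- lam bounds
  have hlam_le : ∀ x, lam x ≤ CV := by
    intro x
    have hx : x ∈ (hBfin x 1).toFinset := by
      rw [Set.Finite.mem_toFinset]
      simp [hd_self x]
    have h1 : lam x ≤ ∑ y ∈ (hBfin x 1).toFinset, lam y :=
      Finset.single_le_sum (fun y _ => hlam_nn y) hx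
    have h2 := (hVol x 1 le_rfl).2
    rw [Real.one_rpow, mul_one] at h2
    linarith
  have hlam_ge : ∀ x, 1 / Cg ≤ lam x := by
    intro x
    have h1 : (1 : ℝ) ≤ ∑' n, nstep p n x x := by
      have := Summable.le_tsum (htrans x x) 0 (fun n _ => nstep_nonneg hpnn n x x)
      rwa [nstep_zero, if_pos rfl] at this
    have h2 : 1 / lam x ≤ green p lam x x := by
      rw [green]
      have := mul_le_mul_of_nonneg_left h1
        (le_of_lt (one_div_pos.mpr (hlam_pos x)))
      linarith
    have h3 : 1 / lam x ≤ Cg := le_trans h2 (hGdiag x).2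
    rw [div_le_iff₀ (hlam_pos x)] at h3
    rw [div_le_iff₀ hCg]
    nlinarith [hlam_pos x]
  -- green upper bound off-diagonal
  have hgreen_le : ∀ x y : V, x ≠ y → green p lam x y ≤ Cg := by
    intro x y hxy
    have h1 : green p lam x y ≤ green p lam y y := by
      rw [green, green]
      exact mul_le_mul_of_nonneg_left
        (G_le_Gdiag hadj hpnn hmass1 htrans x y hxy) (le_of_lt (one_div_pos.mpr (hlam_pos y)))
    exact le_trans h1 (hGdiag y).2
  -- green positivity
  have hgreen_pos : ∀ x y : V, 0 < green p lam x y := by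
    intro x y
    obtain ⟨W⟩ := hconn.preconnected y x
    have h1 : 0 < nstep p W.length x y := nstep_pos_of_walk hadj hpnn hppos W.length x y W rfl
    have h2 : nstep p W.length x y ≤ ∑' n, nstep p n x y :=
      Summable.le_tsum (htrans x y) W.length (fun n _ => nstep_nonneg hpnn n x y)
    rw [green]
    have : 0 < 1 / lam y := one_div_pos.mpr (hlam_pos y)
    nlinarith
  -- edge green lower bound
  have hedge_green : ∀ x y : V, G.Adj x y → c₀ / CV ≤ green p lam x y := by
    intro x y hxy
    have h1 : nstep p 1 x y = p x y := by
      rw [nstep_succ]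
      rw [tsum_eq_single x (fun b hb => by rw [nstep_zero, if_neg (fun h => hb h.symm), zero_mul])]
      rw [nstep_zero, if_pos rfl, one_mul]
    have h2 : p x y ≤ ∑' n, nstep p n x y := by
      have := Summable.le_tsum (htrans x y) 1 (fun n _ => nstep_nonneg hpnn n x y)
      rwa [h1] at this
    have h3 : c₀ ≤ ∑' n, nstep p n x y := le_trans (hp₀ x y hxy) h2
    have h4 : 1 / CV ≤ 1 / lam y := one_div_le_one_div_of_le (hlam_pos y) (hlam_le y)
    calc c₀ / CV = (1/CV) * c₀ := by ring
      _ ≤ (1/lam y) * ∑' n, nstep p n x y :=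
          mul_le_mul h4 h3 (le_of_lt hc₀) (le_of_lt (one_div_pos.mpr (hlam_pos y)))
      _ = green p lam x y := by rw [green]
  -- edge distance bound
  set K : ℝ := (CV * Cg / c₀) ^ (1/ν) with hK_def
  have hK : 0 < K := Real.rpow_pos_of_pos (by positivity) _
  have hedge_d : ∀ x y : V, G.Adj x y → d x y ≤ K := by
    intro x y hxy
    have hne : x ≠ y := G.ne_of_adj hxy
    have h5 : c₀ / CV ≤ Cg * d x y ^ (-ν) :=
      le_trans (hedge_green x y hxy) (hGoff x y hne).2
    rcases eq_or_lt_of_le (hd_nonneg x y) with h0 | h0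
    · rw [← h0]; exact le_of_lt hK
    · have hdν : 0 < d x y ^ ν := Real.rpow_pos_of_pos h0 ν
      rw [Real.rpow_neg (le_of_lt h0)] at h5
      have h6 : d x y ^ ν ≤ CV * Cg / c₀ := by
        rw [le_div_iff₀ hc₀]
        have := mul_le_mul_of_nonneg_right h5 (le_of_lt hdν)
        rw [mul_assoc, inv_mul_cancel₀ (ne_of_gt hdν), mul_one] at this
        rw [div_mul_eq_mul_div, div_le_iff₀ hCV] at this
        nlinarith
      have h7 : (d x y ^ ν) ^ (1/ν) ≤ K :=
        Real.rpow_le_rpow (le_of_lt hdν) h6 (by positivity)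
      rwa [← Real.rpow_mul (le_of_lt h0), mul_one_div, div_self (ne_of_gt hν),
        Real.rpow_one] at h7
  refine ⟨⟨K, hK, ?_⟩, ⟨(cg/Cg) ^ (1/ν), Real.rpow_pos_of_pos (div_pos hcg hCg) _, ?_⟩,
    ⟨c₀/Cg, CV, div_pos hc₀ hCg, ?_⟩⟩
  · -- distance dominated by graph distance
    have hwalk : ∀ (x y : V) (W : G.Walk x y), d x y ≤ K * W.length := by
      intro x y W
      induction W with
      | nil => rw [hd_self]; simp
      | @cons a b c h W ih =>
          have h1 := hd_tri a b c
          have h2 := hedge_d a b h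
          simp only [SimpleGraph.Walk.length_cons]
          push_cast
          linarith
    intro x y
    obtain ⟨W, hW⟩ := hconn.exists_walk_length_eq_dist x y
    have := hwalk x y W
    rwa [hW] at this
  · -- separation
    intro x y hxy
    have hlow := (hGoff x y hxy).1
    have hup : green p lam x y ≤ Cg := hgreen_le x y hxy
    have h0 : 0 < d x y := by
      rcases eq_or_lt_of_le (hd_nonneg x y) with h0 | h0
      · exfalso
        have hz : d x y ^ (-ν) = 0 := by
          rw [← h0, Real.zero_rpow (neg_ne_zero.mpr (ne_of_gt hν))]
        have h9 := (hGoff x y hxy).2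
        rw [hz, mul_zero] at h9
        exact absurd (lt_of_lt_of_le (hgreen_pos x y) h9) (lt_irrefl 0)
      · exact h0
    have hdν : 0 < d x y ^ ν := Real.rpow_pos_of_pos h0 ν
    have h5 : cg * (d x y ^ ν)⁻¹ ≤ Cg := by
      rw [← Real.rpow_neg (le_of_lt h0)]
      exact le_trans hlow hup
    have h6 : cg / Cg ≤ d x y ^ ν := by
      rw [div_le_iff₀ hCg]
      have := mul_le_mul_of_nonneg_right h5 (le_of_lt hdν)
      rw [mul_assoc, inv_mul_cancel₀ (ne_of_gt hdν), mul_one] at this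
      nlinarith
    have h7 : (cg/Cg) ^ (1/ν) ≤ (d x y ^ ν) ^ (1/ν) :=
      Real.rpow_le_rpow (le_of_lt (div_pos hcg hCg)) h6 (by positivity)
    rwa [← Real.rpow_mul (le_of_lt h0), mul_one_div, div_self (ne_of_gt hν),
      Real.rpow_one] at h7
  · -- weight bounds
    intro x y hxy
    have hwle : w x y ≤ lam x := by
      rw [hlam x]
      exact Finset.single_le_sum (fun z _ => hw_nonneg x z)
        ((SimpleGraph.mem_neighborFinset _ _ _).mpr hxy)
    refine ⟨?_, hwle, hlam_le x⟩
    have hw_eq : w x y = p x y * lam x := by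
      rw [hp, div_mul_cancel₀ _ (ne_of_gt (hlam_pos x))]
    rw [hw_eq]
    calc c₀ / Cg = c₀ * (1/Cg) := by ring
      _ ≤ p x y * lam x := mul_le_mul (hp₀ x y hxy) (hlam_ge x)
          (le_of_lt (one_div_pos.mpr hCg)) (hpnn x y)
end

section
/- Assume (p₀), (V_α), (G_β). Then there is a constant C such that for all x ∈ G, R ≥ 1 and all y, y' ∈ B(x,R), the vertices y and y' are connected by a nearest-neighbor path inside B(x, C·R). In fact one may take C = 2C₃ + 1 where C₃ is the constant from the killed-Green-function estimate. -/
/-!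
Suppose `y'` is not reachable from `y` inside `B(x, CR)`, and let `A` be the set of points that
are. The function `g(·, y')` is harmonic on the finite set `A` (it does not contain `y'`), so by
the maximum principle (on a connected graph, for a finite set missing some vertex) `g(y, y')` is
at most the largest value of `g(·, y')` on the outer boundary of `A`. Boundary points lie outside
`B(x, CR)`, hence at distance more than `(C - 1)R` from `y'`, so the two-sided Green function
bounds give `cg (2R)^{-(α-β)} ≤ g(y, y') ≤ Cg ((C - 1)R)^{-(α-β)}`, which fails once
`C - 1 > 2 (Cg / cg)^{1/(α-β)}`.
-/

open scoped ENNReal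

namespace SimpleGraph

variable {V : Type*} {G : SimpleGraph V}

theorem Preconnected.mem_of_adj_closed (hG : G.Preconnected) {S : Set V}
    (hS : ∀ a b, G.Adj a b → a ∈ S → b ∈ S) {a : V} (ha : a ∈ S) (b : V) : b ∈ S := by
  obtain ⟨wk⟩ := hG a b
  induction wk with
  | nil => exact ha
  | cons hadj _ ih => exact ih (hS _ _ hadj ha)

def ballCluster (G : SimpleGraph V) (d : V → V → ℝ) (x : V) (r : ℝ) (y : V) : Set V :=
  {v | ∃ wk : G.Walk y v, ∀ z ∈ wk.support, d x z ≤ r}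

variable {d : V → V → ℝ} {x y : V} {r : ℝ}

theorem ballCluster_subset : G.ballCluster d x r y ⊆ {v | d x v ≤ r} :=
  fun _ ⟨wk, hwk⟩ => hwk _ wk.end_mem_support

theorem mem_ballCluster_self (hy : d x y ≤ r) : y ∈ G.ballCluster d x r y :=
  ⟨.nil, by simpa using hy⟩

theorem lt_of_adj_of_notMem_ballCluster {z b : V} (hz : z ∈ G.ballCluster d x r y)
    (hzb : G.Adj z b) (hb : b ∉ G.ballCluster d x r y) : r < d x b := by
  obtain ⟨wk, hwk⟩ := hz
  by_contra! hbr
  refine hb ⟨wk.concat hzb, fun v hv => ?_⟩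
  rw [Walk.support_concat, List.mem_append, List.mem_singleton] at hv
  rcases hv with hv | rfl
  exacts [hwk v hv, hbr]

variable [∀ v, Fintype (G.neighborSet v)]

def IsHarmonicOn (G : SimpleGraph V) [∀ v, Fintype (G.neighborSet v)] (p : V → V → ℝ)
    (h : V → ℝ) (A : Set V) : Prop :=
  ∀ z ∈ A, h z = ∑ b ∈ G.neighborFinset z, p z b * h b

structure IsTransitionKernel (G : SimpleGraph V) [∀ v, Fintype (G.neighborSet v)]
    (p : V → V → ℝ) : Prop where
  nonneg : ∀ a b, 0 ≤ p a b
  pos_iff_adj : ∀ a b, 0 < p a b ↔ G.Adj a b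
  sum_neighborFinset : ∀ a, ∑ b ∈ G.neighborFinset a, p a b = 1

theorem isTransitionKernel_of_weights [Nontrivial V] (hG : G.Preconnected)
    {w : V → V → ℝ} {lam : V → ℝ} {p : V → V → ℝ}
    (hw_nonneg : ∀ x y, 0 ≤ w x y) (hw_adj : ∀ x y, 0 < w x y ↔ G.Adj x y)
    (hlam : ∀ x, lam x = ∑ y ∈ G.neighborFinset x, w x y) (hp : ∀ x y, p x y = w x y / lam x) :
    (∀ x, 0 < lam x) ∧ G.IsTransitionKernel p := by
  have hlam_pos : ∀ x, 0 < lam x := fun x => by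
    obtain ⟨y, hxy⟩ := hG.exists_adj_of_nontrivial x
    rw [hlam]
    exact Finset.sum_pos' (fun y _ => hw_nonneg x y)
      ⟨y, (mem_neighborFinset G x y).mpr hxy, (hw_adj x y).mpr hxy⟩
  refine ⟨hlam_pos, fun a b => ?_, fun a b => ?_, fun a => ?_⟩
  · rw [hp]; exact div_nonneg (hw_nonneg a b) (hlam_pos a).le
  · rw [hp, div_pos_iff_of_pos_right (hlam_pos a), hw_adj]
  · simp_rw [hp, ← Finset.sum_div, ← hlam, div_self (hlam_pos a).ne']

namespace IsTransitionKernel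

variable {p : V → V → ℝ} (hp : G.IsTransitionKernel p)
include hp

theorem eq_zero_of_not_adj {a b : V} (hab : ¬G.Adj a b) : p a b = 0 :=
  (hp.nonneg a b).eq_of_not_lt (mt (hp.pos_iff_adj a b).mp hab) |>.symm

theorem nstep_nonneg (n : ℕ) (a b : V) : 0 ≤ nstep p n a b := by
  induction n generalizing b with
  | zero => unfold nstep; split <;> norm_num
  | succ n ih => exact tsum_nonneg fun z => mul_nonneg (ih z) (hp.nonneg z b)

theorem nstep_succ_eq_sum_right (n : ℕ) (a b : V) :
    nstep p (n + 1) a b = ∑ z ∈ G.neighborFinset b, nstep p n a z * p z b :=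
  tsum_eq_sum fun z hz => by
    rw [hp.eq_zero_of_not_adj fun h => hz ((mem_neighborFinset G b z).mpr h.symm), mul_zero]

theorem nstep_succ_eq_sum_left (n : ℕ) (a b : V) :
    nstep p (n + 1) a b = ∑ z ∈ G.neighborFinset a, p a z * nstep p n z b := by
  induction n generalizing b with
  | zero =>
    rw [hp.nstep_succ_eq_sum_right]
    simp only [nstep, ite_mul, one_mul, zero_mul, mul_ite, mul_one, mul_zero]
    classical
    rw [Finset.sum_ite_eq, Finset.sum_ite_eq']
    by_cases hab : G.Adj a b
    · simp [hab, hab.symm]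
    · simp [hab, hp.eq_zero_of_not_adj hab]
  | succ n ih =>
    simp_rw [hp.nstep_succ_eq_sum_right (n + 1) a b, ih, hp.nstep_succ_eq_sum_right n _ b,
      Finset.sum_mul, Finset.mul_sum, mul_assoc]
    exact Finset.sum_comm

theorem nstep_length_pos {a b : V} (wk : G.Walk a b) : 0 < nstep p wk.length a b := by
  induction wk with
  | nil => simp [nstep]
  | @cons a c b hac q ih =>
    rw [Walk.length_cons, hp.nstep_succ_eq_sum_left]
    refine lt_of_lt_of_le (mul_pos ((hp.pos_iff_adj a c).mpr hac) ih) ?_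
    exact Finset.single_le_sum (f := fun z => p a z * nstep p q.length z b)
      (fun z _ => mul_nonneg (hp.nonneg a z) (hp.nstep_nonneg _ z b))
      ((mem_neighborFinset G a c).mpr hac)

theorem eq_of_adj_of_forall_adj_le {h : V → ℝ} {z : V}
    (hz : h z = ∑ b ∈ G.neighborFinset z, p z b * h b) (hle : ∀ b, G.Adj z b → h b ≤ h z)
    {b : V} (hzb : G.Adj z b) : h b = h z := by
  have hsum : ∑ c ∈ G.neighborFinset z, p z c * (h z - h c) = 0 := by
    simp_rw [mul_sub, Finset.sum_sub_distrib, ← Finset.sum_mul, hp.sum_neighborFinset, one_mul,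
      ← hz, sub_self]
  have hterm := (Finset.sum_eq_zero_iff_of_nonneg fun c hc => mul_nonneg (hp.nonneg z c)
    (sub_nonneg.mpr (hle c ((mem_neighborFinset G z c).mp hc)))).mp hsum b
    ((mem_neighborFinset G z b).mpr hzb)
  rcases mul_eq_zero.mp hterm with h0 | h0
  · exact absurd h0 ((hp.pos_iff_adj z b).mpr hzb).ne'
  · linarith

theorem le_of_isHarmonicOn (hG : G.Preconnected) {A : Set V} (hA : A.Finite) {v : V}
    (hv : v ∉ A) {h : V → ℝ} (hh : G.IsHarmonicOn p h A) {M : ℝ}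
    (hM : ∀ z ∈ A, ∀ b, G.Adj z b → b ∉ A → h b ≤ M) {z : V} (hz : z ∈ A) : h z ≤ M := by
  by_contra! hMz
  obtain ⟨z₀, hz₀, hmax⟩ := Set.exists_max_image A h hA ⟨z, hz⟩
  have hM₀ : M < h z₀ := hMz.trans_le (hmax z hz)
  have hclosed : ∀ a b, G.Adj a b → a ∈ {c | c ∈ A ∧ h c = h z₀} →
      b ∈ {c | c ∈ A ∧ h c = h z₀} := by
    rintro a b hab ⟨ha, hha⟩
    have hle : ∀ c, G.Adj a c → h c ≤ h a := fun c hac => by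
      by_cases hc : c ∈ A
      · exact hha ▸ hmax c hc
      · exact (hM a ha c hac hc).trans (hha ▸ hM₀.le)
    have hb : h b = h z₀ := (hp.eq_of_adj_of_forall_adj_le (hh a ha) hle hab).trans hha
    by_cases hbA : b ∈ A
    · exact ⟨hbA, hb⟩
    · exact absurd (hM a ha b hab hbA) (hb ▸ hM₀).not_ge
  exact hv (hG.mem_of_adj_closed hclosed ⟨hz₀, rfl⟩ v).1

variable {lam : V → ℝ} {b : V} (htrans : ∀ a, Summable fun n => nstep p n a b)
include htrans

theorem green_pos (hG : G.Preconnected) (hlam : 0 < lam b) (a : V) : 0 < green p lam a b := by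
  obtain ⟨wk⟩ := hG a b
  refine mul_pos (one_div_pos.mpr hlam) (lt_of_lt_of_le (hp.nstep_length_pos wk) ?_)
  exact (htrans a).le_tsum _ fun n _ => hp.nstep_nonneg n a b

theorem isHarmonicOn_green {A : Set V} (hb : b ∉ A) :
    G.IsHarmonicOn p (fun a => green p lam a b) A := by
  intro a ha
  have hab : a ≠ b := ne_of_mem_of_not_mem ha hb
  have hsplit : ∑' n, nstep p n a b = ∑' n, nstep p (n + 1) a b := by
    rw [(htrans a).tsum_eq_zero_add, show nstep p 0 a b = 0 from if_neg hab, zero_add]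
  simp_rw [green, hsplit, hp.nstep_succ_eq_sum_left,
    Summable.tsum_finsetSum fun z _ => (htrans z).mul_left (p a z), tsum_mul_left,
    Finset.mul_sum]
  exact Finset.sum_congr rfl fun z _ => mul_left_comm _ _ _

theorem green_le_of_notMem_ballCluster (hG : G.Preconnected) (hfin : {v | d x v ≤ r}.Finite)
    (hy : d x y ≤ r) (hb : b ∉ G.ballCluster d x r y) {M : ℝ}
    (hM : ∀ v, r < d x v → green p lam v b ≤ M) : green p lam y b ≤ M :=
  hp.le_of_isHarmonicOn hG (hfin.subset ballCluster_subset) hb (hp.isHarmonicOn_green htrans hb)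
    (fun _ hz v hzv hv => hM v (lt_of_adj_of_notMem_ballCluster hz hzv hv))
    (mem_ballCluster_self hy)

end IsTransitionKernel

end SimpleGraph

theorem mul_rpow_neg_lt {c C t R : ℝ} (hc : 0 < c) (hC : 0 < C) (ht : 0 < t) (hR : 0 < R) :
    C * ((2 * (C / c) ^ t⁻¹ + 1) * R) ^ (-t) < c * (2 * R) ^ (-t) := by
  set u := (C / c) ^ t⁻¹
  have hu : 0 < u := by positivity
  have hut : u ^ t = C / c := Real.rpow_inv_rpow (by positivity) ht.ne'
  calc C * ((2 * u + 1) * R) ^ (-t)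
      < C * (u * (2 * R)) ^ (-t) := by
        refine mul_lt_mul_of_pos_left (Real.rpow_lt_rpow_of_neg (by positivity) ?_ (by linarith)) hC
        nlinarith
    _ = c * (2 * R) ^ (-t) := by
        rw [Real.mul_rpow hu.le (by positivity), Real.rpow_neg hu.le, hut, inv_div, ← mul_assoc,
          mul_div_cancel₀ _ hC.ne']

/-- balls are almost connected: there is C such that any two points of B(x,R)
are joined by a nearest-neighbor path staying in B(x, C·R). -/
theorem balls_almost_connected
    {V : Type*} (G : SimpleGraph V) [∀ v : V, Fintype (G.neighborSet v)] [Infinite V]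
    (hconn : G.Connected)
    (w : V → V → ℝ) (lam : V → ℝ) (p : V → V → ℝ) (d : V → V → ℝ)
    (hw_symm : ∀ x y, w x y = w y x)
    (hw_nonneg : ∀ x y, 0 ≤ w x y)
    (hw_adj : ∀ x y, 0 < w x y ↔ G.Adj x y)
    (hlam : ∀ x, lam x = ∑ y ∈ G.neighborFinset x, w x y)
    (hp : ∀ x y, p x y = w x y / lam x)
    (htrans : ∀ x y, Summable (fun n => nstep p n x y))
    (c₀ : ℝ) (hc₀ : 0 < c₀) (hp₀ : ∀ x y, G.Adj x y → c₀ ≤ p x y)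
    (hd_symm : ∀ x y, d x y = d y x)
    (hd_self : ∀ x, d x x = 0)
    (hd_nonneg : ∀ x y, 0 ≤ d x y)
    (hd_tri : ∀ x y z, d x z ≤ d x y + d y z)
    (hBfin : ∀ (x : V) (L : ℝ), {y | d x y ≤ L}.Finite)
    (α β : ℝ) (hα : 2 < α) (hβ₂ : 2 ≤ β) (hβα : β < α)
    (cV CV : ℝ) (hcV : 0 < cV)
    (hVol : ∀ (x : V) (L : ℝ), 1 ≤ L →
      cV * L ^ α ≤ ∑ y ∈ (hBfin x L).toFinset, lam y ∧
        ∑ y ∈ (hBfin x L).toFinset, lam y ≤ CV * L ^ α)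
    (cg Cg : ℝ) (hcg : 0 < cg)
    (hGdiag : ∀ x : V, cg ≤ green p lam x x ∧ green p lam x x ≤ Cg)
    (hGoff : ∀ x y : V, x ≠ y →
      cg * d x y ^ (-(α - β)) ≤ green p lam x y ∧
        green p lam x y ≤ Cg * d x y ^ (-(α - β))) :
    ∃ C : ℝ, 0 < C ∧ ∀ (x : V) (R : ℝ), 1 ≤ R → ∀ y y' : V, d x y ≤ R → d x y' ≤ R →
      ∃ wk : G.Walk y y', ∀ v ∈ wk.support, d x v ≤ C * R := by
  obtain ⟨hlam_pos, hkernel⟩ :=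
    SimpleGraph.isTransitionKernel_of_weights hconn.preconnected hw_nonneg hw_adj hlam hp
  obtain ⟨x₀⟩ : Nonempty V := inferInstance
  have hCg : 0 < Cg := hcg.trans_le ((hGdiag x₀).1.trans (hGdiag x₀).2)
  have ht : 0 < α - β := sub_pos.mpr hβα
  set u := (Cg / cg) ^ (α - β)⁻¹
  refine ⟨2 * u + 2, by positivity, fun x R hR y y' hy hy' => ?_⟩
  by_contra hy'A
  have huR : 0 ≤ u * R := by positivity
  have hyA : y ∈ G.ballCluster d x ((2 * u + 2) * R) y :=
    SimpleGraph.mem_ballCluster_self (by linarith)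
  have hyy' : y ≠ y' := fun h => hy'A (h ▸ hyA)
  have hdyy' : 0 < d y y' := by
    refine (hd_nonneg y y').lt_of_ne fun h0 => ?_
    have hupper := (hGoff y y' hyy').2
    rw [← h0, Real.zero_rpow (neg_ne_zero.mpr ht.ne'), mul_zero] at hupper
    exact hupper.not_gt (hkernel.green_pos (htrans · y') hconn.preconnected (hlam_pos y') y)
  have hupper : green p lam y y' ≤ Cg * ((2 * u + 1) * R) ^ (-(α - β)) := by
    refine hkernel.green_le_of_notMem_ballCluster (htrans · y') hconn.preconnected (hBfin x _)
      (by linarith) hy'A fun b hxb => ?_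
    have hby' : (2 * u + 1) * R < d b y' := by linarith [hd_tri x y' b, hd_symm y' b]
    have hb_ne : b ≠ y' := by rintro rfl; linarith
    exact (hGoff b y' hb_ne).2.trans (mul_le_mul_of_nonneg_left
      (Real.rpow_le_rpow_of_nonpos (by positivity) hby'.le (by linarith)) hCg.le)
  have hlower : cg * (2 * R) ^ (-(α - β)) ≤ green p lam y y' :=
    (mul_le_mul_of_nonneg_left (Real.rpow_le_rpow_of_nonpos hdyy'
      (by linarith [hd_tri y x y', hd_symm x y]) (by linarith)) hcg.le).trans (hGoff y y' hyy').1
  exact (mul_rpow_neg_lt hcg hCg ht (by linarith)).not_ge (hlower.trans hupper)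
end

section
/- Let C be a set of edge-cycles of a graph G such that for every finite edge set S ⊂ E and every edge-cycle Q, there exists C₀ ⊂ C with S ∩ (Q + Σ_{C∈C₀} C) = ∅ (addition of edge sets modulo 2). Then for every finite connected subset A of G and every x ∈ A^c, the set ∂_ext^x A := {y ∈ ∂_ext A : y is connected to x in A^c} is connected in the auxiliary graph G⁺ whose vertices are those of G and in which {y,z} is an edge iff y and z are both traversed by some cycle in C. -/
/-! ### Auxiliary parity lemmas -/

section Helpers

open Finset

lemma zmod_two_add_self (x : ZMod 2) : x + x = 0 := by
  have : (2 : ZMod 2) = 0 := rfl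
  linear_combination x * this

lemma even_iff_zmod (n : ℕ) : Even n ↔ (n : ZMod 2) = 0 := by
  rw [ZMod.natCast_eq_zero_iff]
  exact even_iff_two_dvd

lemma ite_odd_cast (n : ℕ) : (if Odd n then (1:ZMod 2) else 0) = (n : ZMod 2) := by
  rcases Nat.even_or_odd n with h | h
  · rw [if_neg (by simpa using h), (even_iff_zmod n).mp h]
  · rw [if_pos h]
    obtain ⟨k, hk⟩ := h
    subst hk; push_cast
    rw [show ((2:ZMod 2) * k) = 0 by rw [show (2:ZMod 2) = 0 from rfl]; ring]
    ring

variable {α : Type*} [DecidableEq α]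

lemma card_symmDiff_zmod (X Y : Finset α) :
    (((symmDiff X Y).card : ZMod 2)) = X.card + Y.card := by
  have h1 : (X \ Y).card + (X ∩ Y).card = X.card := Finset.card_sdiff_add_card_inter X Y
  have h2 : (Y \ X).card + (Y ∩ X).card = Y.card := Finset.card_sdiff_add_card_inter Y X
  have h3 : (symmDiff X Y).card = (X \ Y).card + (Y \ X).card := by
    rw [symmDiff_def]
    exact Finset.card_union_of_disjoint disjoint_sdiff_sdiff
  have h4 : (X ∩ Y).card = (Y ∩ X).card := by rw [Finset.inter_comm]
  have := congrArg (fun n : ℕ => (n : ZMod 2)) h3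
  push_cast at this ⊢
  rw [this, ← h1, ← h2, h4]
  push_cast
  ring_nf
  rw [show ((Y ∩ X).card : ZMod 2) * 2 = 0 by
    rw [mul_two]; exact zmod_two_add_self _]
  ring

lemma filter_symmDiff' (q : α → Prop) [DecidablePred q] (X Y : Finset α) :
    (symmDiff X Y).filter q = symmDiff (X.filter q) (Y.filter q) := by
  ext e; simp [Finset.mem_symmDiff, Finset.mem_filter]; tauto

lemma card_filter_symmDiff_zmod (q : α → Prop) [DecidablePred q] (X Y : Finset α) :
    ((((symmDiff X Y).filter q).card : ZMod 2)) = (X.filter q).card + (Y.filter q).card := by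
  rw [filter_symmDiff', card_symmDiff_zmod]

end Helpers

/-! ### Parity of walks -/

section Walks

open Finset

variable {V : Type*} [DecidableEq V] {G : SimpleGraph V}

open Classical in
lemma walk_countP_parity {u v : V} (p : G.Walk u v) (w : V) :
    (((p.edges : Multiset (Sym2 V)).countP (fun e => w ∈ e) : ZMod 2)) =
      (if w = u then (1:ZMod 2) else 0) + (if w = v then 1 else 0) := by
  induction p with
  | nil =>
      simp only [SimpleGraph.Walk.edges_nil, Multiset.coe_nil, Multiset.countP_zero,
        Nat.cast_zero]
      exact (zmod_two_add_self _).symm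
  | @cons a b c h q ih =>
      have hab : a ≠ b := h.ne
      have hmem : (if w ∈ s(a,b) then (1:ZMod 2) else 0) =
          (if w = a then 1 else 0) + (if w = b then 1 else 0) := by
        by_cases hwa : w = a <;> by_cases hwb : w = b <;>
          simp_all [Sym2.mem_iff]
      rw [SimpleGraph.Walk.edges_cons]
      have hls : ((s(a,b) :: q.edges : List (Sym2 V)) : Multiset (Sym2 V))
          = s(a,b) ::ₘ (q.edges : Multiset (Sym2 V)) := rfl
      rw [hls, Multiset.countP_cons]
      push_cast [apply_ite (Nat.cast : ℕ → ZMod 2)]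
      rw [ih, hmem]
      linear_combination zmod_two_add_self (if w = b then (1:ZMod 2) else 0)

open Classical in
/-- edges appearing an odd number of times in a walk -/
noncomputable def oddEdges {u v : V} (p : G.Walk u v) : Finset (Sym2 V) :=
  (p.edges : Multiset (Sym2 V)).toFinset.filter
    (fun e => Odd ((p.edges : Multiset (Sym2 V)).count e))

open Classical in
lemma mem_oddEdges {u v : V} (p : G.Walk u v) (e : Sym2 V) :
    e ∈ oddEdges p ↔ Odd ((p.edges : Multiset (Sym2 V)).count e) := by
  unfold oddEdges
  simp only [Finset.mem_filter, Multiset.mem_toFinset, and_iff_right_iff_imp]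
  intro h
  exact Multiset.count_pos.mp (Nat.pos_of_ne_zero (by intro h0; rw [h0] at h; simp at h))

open Classical in
lemma oddEdges_subset_edges {u v : V} (p : G.Walk u v) {e : Sym2 V} (he : e ∈ oddEdges p) :
    e ∈ p.edges := by
  unfold oddEdges at he
  simpa using (Finset.mem_filter.mp he).1

open Classical in
lemma oddEdges_filter_parity {u v : V} (p : G.Walk u v) (w : V) :
    ((((oddEdges p).filter (fun e => w ∈ e)).card : ZMod 2)) =
      (if w = u then (1:ZMod 2) else 0) + (if w = v then 1 else 0) := by
  classical
  set M : Multiset (Sym2 V) := (p.edges : Multiset (Sym2 V)) with hM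
  have h1 : (oddEdges p).filter (fun e => w ∈ e) =
      (M.toFinset.filter (fun e => w ∈ e)).filter (fun e => Odd (M.count e)) := by
    ext e; unfold oddEdges; simp only [Finset.mem_filter, Multiset.mem_toFinset, ← hM]; tauto
  rw [h1, Finset.card_filter]
  push_cast [apply_ite (Nat.cast : ℕ → ZMod 2)]
  have h2 : ∀ e ∈ M.toFinset.filter (fun e => w ∈ e),
      (if Odd (M.count e) then (1:ZMod 2) else 0) = ((M.count e : ZMod 2)) := by
    intro e _; exact ite_odd_cast _
  rw [Finset.sum_congr rfl h2]
  have h3 : ∑ e ∈ M.toFinset.filter (fun e => w ∈ e), ((M.count e : ZMod 2)) =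
      (((M.filter (fun e => w ∈ e)).card : ZMod 2)) := by
    rw [← Multiset.toFinset_sum_count_eq (M.filter (fun e => w ∈ e))]
    rw [Multiset.toFinset_filter]
    push_cast
    refine Finset.sum_congr rfl ?_
    intro e he
    rw [Multiset.count_filter_of_pos (p := fun e => w ∈ e) (Finset.mem_filter.mp he).2]
  rw [h3, ← Multiset.countP_eq_card_filter]
  exact walk_countP_parity p w

lemma getVert_mem_support' {u v : V} (p : G.Walk u v) (n : ℕ) : p.getVert n ∈ p.support := by
  induction p generalizing n with
  | nil => cases n <;> simp [SimpleGraph.Walk.getVert]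
  | cons h q ih =>
      cases n with
      | zero => simp [SimpleGraph.Walk.getVert_zero]
      | succ n =>
          rw [SimpleGraph.Walk.getVert_cons_succ, SimpleGraph.Walk.support_cons]
          exact List.mem_cons_of_mem _ (ih n)

end Walks

/-! ### Cut parity -/

section Cut

open Finset

variable {V : Type*} [DecidableEq V]

/-- both endpoints of a Sym2 as a Finset -/
def symPair : Sym2 V → Finset V :=
  Sym2.lift ⟨fun u v => {u, v}, fun u v => Finset.pair_comm u v⟩

@[simp] lemma symPair_mk (u v : V) : symPair s(u,v) = {u, v} := rfl

@[simp] lemma mem_symPair (w : V) (e : Sym2 V) : w ∈ symPair e ↔ w ∈ e := by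
  induction e with
  | _ u v => simp [Sym2.mem_iff]

open Classical in
/-- For an even-degree edge set, the number of edges crossing any vertex-set boundary is even. -/
lemma cut_even (G : SimpleGraph V) (c : Finset (Sym2 V))
    (hE : (↑c : Set (Sym2 V)) ⊆ G.edgeSet)
    (hdeg : ∀ v : V, Even ((c.filter (fun e => v ∈ e)).card))
    (W : Set V) :
    (((c.filter (fun e => ∃ p r, e = s(p,r) ∧ p ∉ W ∧ r ∈ W)).card : ZMod 2)) = 0 := by
  classical
  set T : Finset V := c.biUnion symPair with hT
  have step1 : ∀ e ∈ c, ((if (∃ p r, e = s(p,r) ∧ p ∉ W ∧ r ∈ W) then (1:ZMod 2) else 0))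
      = (((symPair e).filter (fun w => w ∈ W)).card : ZMod 2) := by
    intro e he
    induction e with
    | _ p r =>
      have hpr : p ≠ r := by
        have := hE he
        rw [SimpleGraph.mem_edgeSet] at this
        exact this.ne
      have hiff : (∃ p' r', s(p,r) = s(p',r') ∧ p' ∉ W ∧ r' ∈ W) ↔
          ((p ∉ W ∧ r ∈ W) ∨ (r ∉ W ∧ p ∈ W)) := by
        constructor
        · rintro ⟨p', r', heq, h1, h2⟩
          rcases Sym2.eq_iff.mp heq with ⟨rfl, rfl⟩ | ⟨rfl, rfl⟩
          · exact Or.inl ⟨h1, h2⟩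
          · exact Or.inr ⟨h1, h2⟩
        · rintro (⟨h1, h2⟩ | ⟨h1, h2⟩)
          · exact ⟨p, r, rfl, h1, h2⟩
          · exact ⟨r, p, Sym2.eq_swap, h1, h2⟩
      have hcard : (({p, r} : Finset V).filter (fun w => w ∈ W)).card
          = (if p ∈ W then 1 else 0) + (if r ∈ W then 1 else 0) := by
        rw [Finset.filter_insert, Finset.filter_singleton]
        by_cases hp : p ∈ W <;> by_cases hr : r ∈ W <;>
          simp [hp, hr, Finset.card_insert_of_notMem, hpr]
      rw [symPair_mk, hcard, propext hiff]
      by_cases hp : p ∈ W <;> by_cases hr : r ∈ W <;>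
        simp [hp, hr] <;> push_cast <;> decide
  have step2 : (((c.filter (fun e => ∃ p r, e = s(p,r) ∧ p ∉ W ∧ r ∈ W)).card : ZMod 2))
      = ∑ e ∈ c, (((symPair e).filter (fun w => w ∈ W)).card : ZMod 2) := by
    rw [Finset.card_filter]
    push_cast [apply_ite (Nat.cast : ℕ → ZMod 2)]
    exact Finset.sum_congr rfl step1
  rw [step2]
  have hsub : ∀ e ∈ c, symPair e ⊆ T := fun e he => Finset.subset_biUnion_of_mem symPair he
  have step3 : ∀ e ∈ c, (((symPair e).filter (fun w => w ∈ W)).card : ZMod 2)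
      = ∑ w ∈ T.filter (fun w => w ∈ W), (if w ∈ e then (1:ZMod 2) else 0) := by
    intro e he
    have : (symPair e).filter (fun w => w ∈ W)
        = (T.filter (fun w => w ∈ W)).filter (fun w => w ∈ e) := by
      ext w
      simp only [Finset.mem_filter, mem_symPair]
      constructor
      · rintro ⟨h1, h2⟩
        exact ⟨⟨hsub e he ((mem_symPair w e).mpr h1), h2⟩, h1⟩
      · rintro ⟨⟨_, h2⟩, h1⟩
        exact ⟨h1, h2⟩
    rw [this, Finset.card_filter]
    push_cast
    rfl
  rw [Finset.sum_congr rfl step3, Finset.sum_comm]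
  have step4 : ∀ w ∈ T.filter (fun w => w ∈ W),
      ∑ e ∈ c, (if w ∈ e then (1:ZMod 2) else 0) = 0 := by
    intro w _
    have : ∑ e ∈ c, (if w ∈ e then (1:ZMod 2) else 0)
        = (((c.filter (fun e => w ∈ e)).card : ZMod 2)) := by
      rw [Finset.card_filter]; push_cast [apply_ite (Nat.cast : ℕ → ZMod 2)]; rfl
    rw [this]
    obtain ⟨k, hk⟩ := hdeg w
    rw [hk]; push_cast
    exact zmod_two_add_self _
  rw [Finset.sum_congr rfl step4, Finset.sum_const, smul_zero]

open Classical in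
lemma sum_cycles_filter_parity (C₀ : Finset (Finset (Sym2 V))) (q : Sym2 V → Prop) :
    (((((C₀.sup id).filter (fun e => Odd ((C₀.filter (fun c => e ∈ c)).card))).filter q).card
        : ZMod 2))
      = ∑ c ∈ C₀, (((c.filter q).card : ZMod 2)) := by
  classical
  set U := C₀.sup id with hU
  have h1 : ((U.filter (fun e => Odd ((C₀.filter (fun c => e ∈ c)).card))).filter q)
      = (U.filter q).filter (fun e => Odd ((C₀.filter (fun c => e ∈ c)).card)) := by
    ext e; simp only [Finset.mem_filter]; tauto
  rw [h1, Finset.card_filter]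
  push_cast [apply_ite (Nat.cast : ℕ → ZMod 2)]
  have h2 : ∀ e ∈ U.filter q,
      (if Odd ((C₀.filter (fun c => e ∈ c)).card) then (1:ZMod 2) else 0)
        = (((C₀.filter (fun c => e ∈ c)).card : ZMod 2)) := fun e _ => ite_odd_cast _
  rw [Finset.sum_congr rfl h2]
  have h3 : ∀ e ∈ U.filter q, (((C₀.filter (fun c => e ∈ c)).card : ZMod 2))
      = ∑ c ∈ C₀, (if e ∈ c then (1:ZMod 2) else 0) := by
    intro e _
    rw [Finset.card_filter]; push_cast [apply_ite (Nat.cast : ℕ → ZMod 2)]; rfl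
  rw [Finset.sum_congr rfl h3, Finset.sum_comm]
  refine Finset.sum_congr rfl ?_
  intro c hc
  have hsub : c ⊆ U := by
    intro e he
    exact Finset.mem_sup.mpr ⟨c, hc, he⟩
  have : c.filter q = (U.filter q).filter (fun e => e ∈ c) := by
    ext e
    simp only [Finset.mem_filter]
    exact ⟨fun ⟨h1', h2'⟩ => ⟨⟨hsub h1', h2'⟩, h1'⟩, fun ⟨⟨_, h2'⟩, h3'⟩ => ⟨h3', h2'⟩⟩
  rw [this, Finset.card_filter]
  push_cast [apply_ite (Nat.cast : ℕ → ZMod 2)]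
  rfl

end Cut

/-- An unbounded nearest-neighbor path in Aᶜ starting at y. -/
def escapes {V : Type*} (G : SimpleGraph V) (A : Set V) (y : V) : Prop :=
  ∃ f : ℕ → V, f 0 = y ∧ (∀ n, G.Adj (f n) (f (n + 1))) ∧ (∀ n, f n ∉ A) ∧
    (Set.range f).Infinite

/-- The part ∂_ext^x A of the external boundary of A connected to x within Aᶜ. -/
def extBdryTo {V : Type*} (G : SimpleGraph V) (A : Set V) (x : V) : Set V :=
  {y | y ∉ A ∧ (∃ z ∈ A, G.Adj z y) ∧ escapes G A y ∧
    ∃ wk : G.Walk y x, ∀ v ∈ wk.support, v ∉ A}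

section Escape

variable {V : Type*} [DecidableEq V] {G : SimpleGraph V}

lemma escapes_of_walk {A : Set V} {v y : V} (hy : escapes G A y)
    (wk : G.Walk v y) (hwk : ∀ u ∈ wk.support, u ∉ A) : escapes G A v := by
  obtain ⟨f, hf0, hfadj, hfA, hfinf⟩ := hy
  refine ⟨fun n => if n ≤ wk.length then wk.getVert n else f (n - wk.length),
    by simp [wk.getVert_zero], ?_, ?_, ?_⟩
  · intro n
    dsimp only
    rcases Nat.lt_or_ge n wk.length with h | h
    · rw [if_pos (by omega), if_pos (by omega)]
      exact wk.adj_getVert_succ h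
    · by_cases h3 : n = wk.length
      · subst h3
        rw [if_pos (by omega), if_neg (by omega), wk.getVert_length,
          show wk.length + 1 - wk.length = 1 from by omega, ← hf0]
        exact hfadj 0
      · rw [if_neg (by omega), if_neg (by omega),
          show n + 1 - wk.length = (n - wk.length) + 1 from by omega]
        exact hfadj _
  · intro n
    dsimp only
    by_cases h : n ≤ wk.length
    · rw [if_pos h]
      exact hwk _ (getVert_mem_support' wk n)
    · rw [if_neg h]; exact hfA _
  · apply Set.Infinite.mono ?_ hfinf
    rintro w ⟨k, hk⟩
    refine ⟨k + wk.length, ?_⟩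
    dsimp only
    by_cases hk0 : k = 0
    · subst hk0
      rw [if_pos (by omega)]
      simpa [wk.getVert_length, hf0] using hk
    · rw [if_neg (by omega), show k + wk.length - wk.length = k from by omega]
      exact hk

end Escape

open Classical in
/-- if the family 𝒞 of cycles can be used to push any cycle off any finite edge
set (mod 2), then ∂_ext^x A is connected in the graph G⁺ in which two vertices are adjacent iff
some cycle of 𝒞 traverses both. -/
theorem external_boundary_connected_in_cycle_graph
    {V : Type*} [DecidableEq V] (G : SimpleGraph V)
    [∀ v : V, Fintype (G.neighborSet v)] [Infinite V] (hconn : G.Connected)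
    (𝒞 : Set (Finset (Sym2 V)))
    (h𝒞 : ∀ c ∈ 𝒞, (↑c : Set (Sym2 V)) ⊆ G.edgeSet ∧
      ∀ v : V, Even ((c.filter (fun e => v ∈ e)).card))
    (hmain : ∀ S : Finset (Sym2 V), (↑S : Set (Sym2 V)) ⊆ G.edgeSet →
      ∀ Q : Finset (Sym2 V), (↑Q : Set (Sym2 V)) ⊆ G.edgeSet →
      (∀ v : V, Even ((Q.filter (fun e => v ∈ e)).card)) →
      ∃ C₀ : Finset (Finset (Sym2 V)), (↑C₀ : Set (Finset (Sym2 V))) ⊆ 𝒞 ∧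
        S ∩ (symmDiff Q ((C₀.sup id).filter
          (fun e => Odd ((C₀.filter (fun c => e ∈ c)).card)))) = ∅)
    (A : Set V) (hAfin : A.Finite)
    (hAconn : ∀ a ∈ A, ∀ b ∈ A, ∃ wk : G.Walk a b, ∀ v ∈ wk.support, v ∈ A)
    (x : V) (hx : x ∉ A) :
    ∀ y ∈ extBdryTo G A x, ∀ z ∈ extBdryTo G A x,
      Relation.ReflTransGen (fun a b =>
        a ∈ extBdryTo G A x ∧ b ∈ extBdryTo G A x ∧
        ∃ c ∈ 𝒞, (∃ e ∈ c, a ∈ e) ∧ (∃ e ∈ c, b ∈ e)) y z := by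
  classical
  intro y hy z hz
  set R : V → V → Prop := fun a b =>
    a ∈ extBdryTo G A x ∧ b ∈ extBdryTo G A x ∧
      ∃ c ∈ 𝒞, (∃ e ∈ c, a ∈ e) ∧ (∃ e ∈ c, b ∈ e) with hRdef
  show Relation.ReflTransGen R y z
  by_cases hyz : y = z
  · exact hyz ▸ Relation.ReflTransGen.refl
  by_contra hne
  obtain ⟨hyA, ⟨a, haA, haadj⟩, hyesc, Wy, hWy⟩ := hy
  obtain ⟨hzA, ⟨b, hbA, hbadj⟩, hzesc, Wz, hWz⟩ := hz
  -- the component of x in the complement of A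
  set D : Set V := {v | v ∉ A ∧ ∃ wk : G.Walk v x, ∀ u ∈ wk.support, u ∉ A} with hDdef
  have hyD : y ∈ D := ⟨hyA, Wy, hWy⟩
  have hzD : z ∈ D := ⟨hzA, Wz, hWz⟩
  have hDadj : ∀ u w : V, u ∈ D → G.Adj u w → w ∉ A → w ∈ D := by
    rintro u w ⟨huA, wku, hwku⟩ hadj hwA
    refine ⟨hwA, SimpleGraph.Walk.cons hadj.symm wku, ?_⟩
    intro t ht
    rw [SimpleGraph.Walk.support_cons] at ht
    rcases List.mem_cons.mp ht with rfl | ht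
    · exact hwA
    · exact hwku t ht
  have hDext : ∀ v : V, v ∈ D → (∃ u ∈ A, G.Adj u v) → v ∈ extBdryTo G A x := by
    rintro v ⟨hvA, wkv, hwkv⟩ ⟨u, huA, huadj⟩
    refine ⟨hvA, ⟨u, huA, huadj⟩, ?_, wkv, hwkv⟩
    refine escapes_of_walk hyesc (wkv.append Wy.reverse) ?_
    intro t ht
    rw [SimpleGraph.Walk.support_append, List.mem_append] at ht
    rcases ht with ht | ht
    · exact hwkv t ht
    · refine hWy t ?_
      have ht' := List.mem_of_mem_tail ht
      rwa [SimpleGraph.Walk.support_reverse, List.mem_reverse] at ht' 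
  -- the big cycle Q through A
  obtain ⟨Pab, hPab⟩ := hAconn a haA b hbA
  set Pyz : G.Walk y z :=
    SimpleGraph.Walk.cons haadj.symm (Pab.append (SimpleGraph.Walk.cons hbadj .nil)) with hPyz
  set Q1 := oddEdges Pyz with hQ1
  set Q2 := oddEdges Wz with hQ2
  set Q3 := oddEdges Wy with hQ3
  set Q := symmDiff (symmDiff Q1 Q2) Q3 with hQ
  have hQ1sub : ∀ e ∈ Q1, e ∈ Pyz.edges := fun e he => oddEdges_subset_edges _ he
  have hQ2sub : ∀ e ∈ Q2, e ∈ Wz.edges := fun e he => oddEdges_subset_edges _ he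
  have hQ3sub : ∀ e ∈ Q3, e ∈ Wy.edges := fun e he => oddEdges_subset_edges _ he
  have hQmem : ∀ e ∈ Q, e ∈ Q1 ∨ e ∈ Q2 ∨ e ∈ Q3 := by
    intro e he
    rw [hQ, Finset.mem_symmDiff] at he
    rcases he with ⟨he, _⟩ | ⟨he, _⟩
    · rw [Finset.mem_symmDiff] at he
      rcases he with ⟨he, _⟩ | ⟨he, _⟩
      · exact Or.inl he
      · exact Or.inr (Or.inl he)
    · exact Or.inr (Or.inr he)
  have hQsubE : (↑Q : Set (Sym2 V)) ⊆ G.edgeSet := by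
    intro e he
    rcases hQmem e he with h | h | h
    · exact Pyz.edges_subset_edgeSet (hQ1sub e h)
    · exact Wz.edges_subset_edgeSet (hQ2sub e h)
    · exact Wy.edges_subset_edgeSet (hQ3sub e h)
  have hQeven : ∀ v : V, Even ((Q.filter (fun e => v ∈ e)).card) := by
    intro v
    rw [even_iff_zmod, hQ]
    rw [card_filter_symmDiff_zmod, card_filter_symmDiff_zmod]
    rw [hQ1, hQ2, hQ3, oddEdges_filter_parity, oddEdges_filter_parity, oddEdges_filter_parity]
    linear_combination zmod_two_add_self (if v = y then (1:ZMod 2) else 0) +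
      zmod_two_add_self (if v = z then (1:ZMod 2) else 0) +
      zmod_two_add_self (if v = x then (1:ZMod 2) else 0)
  -- the finite edge set S of edges incident to A
  set S : Finset (Sym2 V) := hAfin.toFinset.biUnion (fun u => G.incidenceFinset u) with hS
  have hSmem : ∀ e : Sym2 V, e ∈ S ↔ ∃ u ∈ A, e ∈ G.edgeSet ∧ u ∈ e := by
    intro e
    simp only [hS, Finset.mem_biUnion, Set.Finite.mem_toFinset,
      SimpleGraph.mem_incidenceFinset, SimpleGraph.incidenceSet, Set.mem_setOf_eq]
  have hSsub : (↑S : Set (Sym2 V)) ⊆ G.edgeSet := by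
    intro e he
    obtain ⟨u, _, h1, _⟩ := (hSmem e).mp he
    exact h1
  obtain ⟨C₀, hC₀, hdisj⟩ := hmain S hSsub Q hQsubE hQeven
  set T := (C₀.sup id).filter (fun e => Odd ((C₀.filter (fun c => e ∈ c)).card)) with hT
  have hTsubE : (↑T : Set (Sym2 V)) ⊆ G.edgeSet := by
    intro e he
    rw [hT, Finset.mem_coe, Finset.mem_filter] at he
    obtain ⟨c, hc, hec⟩ := Finset.mem_sup.mp he.1
    exact (h𝒞 c (hC₀ hc)).1 hec
  -- the key predicate
  set P₁ : Sym2 V → Prop := fun e => ∃ u v : V, e = s(u,v) ∧ u ∈ A ∧ v ∈ D ∧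
    Relation.ReflTransGen R y v with hP₁
  -- K ∩ S = ∅: no crossing edges survive
  have hK0 : (((symmDiff Q T).filter P₁).card : ZMod 2) = 0 := by
    have : (symmDiff Q T).filter P₁ = ∅ := by
      rw [Finset.eq_empty_iff_forall_notMem]
      intro e he
      rw [Finset.mem_filter] at he
      obtain ⟨heK, u, v, rfl, huA, hvD, _⟩ := he
      have heE : s(u,v) ∈ G.edgeSet := by
        rw [Finset.mem_symmDiff] at heK
        rcases heK with ⟨h1, _⟩ | ⟨h1, _⟩
        · exact hQsubE h1
        · exact hTsubE h1
      have heS : s(u,v) ∈ S := (hSmem _).mpr ⟨u, huA, heE, Sym2.mem_mk_left u v⟩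
      have : s(u,v) ∈ S ∩ symmDiff Q T := Finset.mem_inter.mpr ⟨heS, heK⟩
      rw [hdisj] at this
      exact absurd this (Finset.notMem_empty _)
    rw [this]
    simp
  -- Q contributes exactly the single edge s(y,a)
  have hQfilter : Q.filter P₁ = {s(y,a)} := by
    have hsya_notQ2 : s(y,a) ∉ Q2 := by
      intro h
      exact hWz a (SimpleGraph.Walk.snd_mem_support_of_mem_edges Wz (hQ2sub _ h)) haA
    have hsya_notQ3 : s(y,a) ∉ Q3 := by
      intro h
      exact hWy a (SimpleGraph.Walk.snd_mem_support_of_mem_edges Wy (hQ3sub _ h)) haA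
    have hedges : Pyz.edges
        = s(y,a) :: (Pab.edges ++ [s(b,z)]) := by
      rw [hPyz, SimpleGraph.Walk.edges_cons, SimpleGraph.Walk.edges_append,
        SimpleGraph.Walk.edges_cons, SimpleGraph.Walk.edges_nil]
    have hyabz : s(y,a) ≠ s(b,z) := by
      intro h
      rcases Sym2.eq_iff.mp h with ⟨h1, _⟩ | ⟨h1, _⟩
      · exact hyA (h1 ▸ hbA)
      · exact hyz h1
    have hsya_Q1 : s(y,a) ∈ Q1 := by
      rw [hQ1, mem_oddEdges, hedges]
      have h1 : ((s(y,a) :: (Pab.edges ++ [s(b,z)]) : List (Sym2 V)) : Multiset (Sym2 V))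
          = s(y,a) ::ₘ ((Pab.edges : Multiset (Sym2 V)) + ([s(b,z)] : List (Sym2 V))) := rfl
      rw [h1, Multiset.count_cons_self, Multiset.count_add]
      have h2 : Multiset.count s(y,a) (Pab.edges : Multiset (Sym2 V)) = 0 := by
        rw [Multiset.count_eq_zero]
        intro hmem
        rw [Multiset.mem_coe] at hmem
        exact hyA (hPab y (SimpleGraph.Walk.fst_mem_support_of_mem_edges Pab hmem))
      have h3 : Multiset.count s(y,a) (([s(b,z)] : List (Sym2 V)) : Multiset (Sym2 V)) = 0 := by
        rw [Multiset.count_eq_zero]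
        intro hmem
        rw [Multiset.mem_coe, List.mem_singleton] at hmem
        exact hyabz hmem
      rw [h2, h3]
      decide
    have hsyaQ : s(y,a) ∈ Q := by
      rw [hQ, Finset.mem_symmDiff]
      exact Or.inl ⟨Finset.mem_symmDiff.mpr (Or.inl ⟨hsya_Q1, hsya_notQ2⟩), hsya_notQ3⟩
    have hsyaP : P₁ s(y,a) := ⟨a, y, Sym2.eq_swap, haA, hyD, Relation.ReflTransGen.refl⟩
    ext e
    simp only [Finset.mem_filter, Finset.mem_singleton]
    constructor
    · rintro ⟨heQ, heP⟩
      rw [hP₁] at heP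
      obtain ⟨u, v, rfl, huA, hvD, hreach⟩ := heP
      rcases hQmem _ heQ with h | h | h
      · have hmemE := hQ1sub _ h
        rw [hedges] at hmemE
        rcases List.mem_cons.mp hmemE with heq | hmemE
        · exact heq
        · rcases List.mem_append.mp hmemE with hmemE | hmemE
          · exact absurd (hPab v (SimpleGraph.Walk.snd_mem_support_of_mem_edges Pab hmemE))
              hvD.1
          · rw [List.mem_singleton] at hmemE
            rcases Sym2.eq_iff.mp hmemE with ⟨_, h2⟩ | ⟨h1, _⟩
            · exact absurd (h2 ▸ hreach) hne
            · exact absurd (h1 ▸ hzA) (fun hc => hc huA)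
      · exact absurd (hWz u (SimpleGraph.Walk.fst_mem_support_of_mem_edges Wz (hQ2sub _ h)))
          (fun hc => hc huA)
      · exact absurd (hWy u (SimpleGraph.Walk.fst_mem_support_of_mem_edges Wy (hQ3sub _ h)))
          (fun hc => hc huA)
    · rintro rfl
      exact ⟨hsyaQ, hsyaP⟩
  -- each cycle contributes evenly
  have hcyc : ∀ c ∈ C₀, (((c.filter P₁).card : ZMod 2)) = 0 := by
    intro c hcC₀
    have hc𝒞 : c ∈ 𝒞 := hC₀ hcC₀
    obtain ⟨hcE, hcdeg⟩ := h𝒞 c hc𝒞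
    by_cases hcase : ∃ v', v' ∈ extBdryTo G A x ∧ Relation.ReflTransGen R y v' ∧ ∃ e ∈ c, v' ∈ e
    · obtain ⟨v', hv'ext, hv'reach, e', he'c, hv'e'⟩ := hcase
      have hfe : c.filter P₁ = c.filter (fun e => ∃ p r, e = s(p,r) ∧ p ∉ D ∧ r ∈ D) := by
        ext e
        simp only [Finset.mem_filter, hP₁]
        constructor
        · rintro ⟨hec, u, v, rfl, huA, hvD, _⟩
          exact ⟨hec, u, v, rfl, fun hD => hD.1 huA, hvD⟩
        · rintro ⟨hec, p, r, rfl, hpD, hrD⟩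
          have hadj : G.Adj p r := (G.mem_edgeSet).mp (hcE hec)
          have hpA : p ∈ A := by
            by_contra hpA
            exact hpD (hDadj r p hrD hadj.symm hpA)
          have hrext : r ∈ extBdryTo G A x := hDext r hrD ⟨p, hpA, hadj⟩
          have hstep : R v' r :=
            ⟨hv'ext, hrext, c, hc𝒞, ⟨e', he'c, hv'e'⟩, ⟨s(p,r), hec, Sym2.mem_mk_right p r⟩⟩
          exact ⟨hec, p, r, rfl, hpA, hrD, hv'reach.tail hstep⟩
      rw [hfe]
      exact cut_even G c hcE hcdeg D
    · have hempty : c.filter P₁ = ∅ := by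
        rw [Finset.eq_empty_iff_forall_notMem]
        intro e he
        rw [Finset.mem_filter, hP₁] at he
        obtain ⟨hec, u, v, rfl, huA, hvD, hreach⟩ := he
        have hadj : G.Adj u v := (G.mem_edgeSet).mp (hcE hec)
        have hvext := hDext v hvD ⟨u, huA, hadj⟩
        exact hcase ⟨v, hvext, hreach, s(u,v), hec, Sym2.mem_mk_right u v⟩
      rw [hempty]
      simp
  -- final contradiction
  have hsum := card_filter_symmDiff_zmod P₁ Q T
  have hTsum : ((T.filter P₁).card : ZMod 2) = 0 := by
    rw [hT, sum_cycles_filter_parity]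
    exact Finset.sum_eq_zero hcyc
  rw [hsum, hQfilter, hTsum, Finset.card_singleton] at hK0
  norm_num at hK0
end
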